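/- Let Z be an invertible n×n matrix over a field K, let λ : n → K with λ_i ≠ 1 for every i, let D = diag(λ), G_i the elementary matrix with a 1 in the (i,i) entry, U_i = Z G_i Z⁻¹, A = Z D Z⁻¹, and let b be a vector. Suppose the sequence of vectors (m_i) satisfies m_i = A m_{i-1} + b for l+1 ≤ i ≤ l+N. Then m_{l+N} = (∑_i λ_i^N U_i) m_l + (∑_i ((1 − λ_i^N)/(1 − λ_i)) U_i) b. -/

import Mathlib

/-!
Solving the affine recursion gives `m (l + N) = A ^ N m l + (∑_{k < N} A ^ k) b`. Since
`c ↦ Z (diag c) Z⁻¹` is an algebra homomorphism from `n → K` to matrices sending `Pi.single i 1`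
to `U i` and `lam` to `A`, both `A ^ N` and the geometric sum `∑_{k < N} A ^ k` are computed
eigenvalue by eigenvalue, where `∑_{k < N} λ ^ k = (1 - λ ^ N) / (1 - λ)` for `λ ≠ 1`.
-/

open Matrix Finset

theorem Matrix.mulVec_eq_pow_mulVec_add_geom_sum_mulVec {n R : Type*} [Fintype n] [DecidableEq n]
    [Semiring R]
    (A : Matrix n n R) (b : n → R) (m : ℕ → n → R) (l N : ℕ)
    (hrec : ∀ i, l + 1 ≤ i → i ≤ l + N → m i = A *ᵥ m (i - 1) + b) :
    m (l + N) = (A ^ N) *ᵥ m l + (∑ k ∈ range N, A ^ k) *ᵥ b := by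
  induction N with
  | zero => simp
  | succ N ih =>
    have hstep : m (l + (N + 1)) = A *ᵥ m (l + N) + b := hrec _ (by omega) le_rfl
    rw [hstep, ih fun i hi hiN => hrec i hi (by omega), mulVec_add, mulVec_mulVec, mulVec_mulVec,
      ← pow_succ', geom_sum_succ, add_mulVec, one_mulVec, add_assoc]

section DiagonalConj

variable {n R : Type*} [Fintype n] [DecidableEq n] [CommRing R]

noncomputable def Matrix.diagonalConj (Z : Matrix n n R) [Invertible Z] :
    (n → R) →ₐ[R] Matrix n n R :=
  (MulSemiringAction.toAlgEquiv R _ (ConjAct.toConjAct (unitOfInvertible Z))).toAlgHom.comp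
    (diagonalAlgHom R)

theorem Matrix.diagonalConj_apply (Z : Matrix n n R) [Invertible Z] (c : n → R) :
    diagonalConj Z c = Z * diagonal c * Z⁻¹ := by
  simp [diagonalConj, ConjAct.units_smul_def]

theorem Matrix.sum_smul_conj_single (Z : Matrix n n R) [Invertible Z] (c : n → R) :
    ∑ i, c i • (Z * single i i 1 * Z⁻¹) = diagonalConj Z c := by
  conv_rhs => rw [pi_eq_sum_univ' c]
  simp only [map_sum, map_smul, diagonalConj_apply, diagonal_single]

end DiagonalConj

theorem geom_sum_eq_one_sub_div {K : Type*} [DivisionRing K] {x : K} (hx : x ≠ 1) (N : ℕ) :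
    ∑ k ∈ range N, x ^ k = (1 - x ^ N) / (1 - x) := by
  rw [range_eq_Ico, geom_sum_Ico' hx N.zero_le, pow_zero]

/-- The multiscale Bloch formula: if `m i = A (m (i-1)) + b` on `l+1 ≤ i ≤ l+N` with
`A = Z D Z⁻¹`, `D = diag(λ)` and `λ i ≠ 1`, then
`m (l+N) = (∑ i, λ i ^ N • U i) (m l) + (∑ i, ((1 - λ i ^ N)/(1 - λ i)) • U i) b`. -/
theorem multiscale_bloch_formula
    {n : Type*} [Fintype n] [DecidableEq n] {K : Type*} [Field K]
    (Z : Matrix n n K) [Invertible Z] (lam : n → K) (hlam : ∀ i, lam i ≠ 1)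
    (b : n → K) (m : ℕ → n → K) (l N : ℕ) :
    let D : Matrix n n K := Matrix.diagonal lam
    let G : n → Matrix n n K := fun i => Matrix.single i i 1
    let U : n → Matrix n n K := fun i => Z * G i * Z⁻¹
    let A : Matrix n n K := Z * D * Z⁻¹
    (∀ i, l + 1 ≤ i → i ≤ l + N → m i = A.mulVec (m (i - 1)) + b) →
      m (l + N) = (∑ i, lam i ^ N • U i).mulVec (m l)
        + (∑ i, ((1 - lam i ^ N) / (1 - lam i)) • U i).mulVec b := by
  intro D G U A hrec
  have hA : A = diagonalConj Z lam := (diagonalConj_apply Z lam).symm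
  have hgeom : ∑ k ∈ range N, lam ^ k = fun i => (1 - lam i ^ N) / (1 - lam i) := by
    ext i
    simp only [Finset.sum_apply, Pi.pow_apply, geom_sum_eq_one_sub_div (hlam i)]
  have hpow : A ^ N = ∑ i, lam i ^ N • U i := by
    rw [sum_smul_conj_single, hA, ← map_pow]
    rfl
  have hsum : ∑ k ∈ range N, A ^ k = ∑ i, ((1 - lam i ^ N) / (1 - lam i)) • U i := by
    rw [sum_smul_conj_single, ← hgeom, map_sum, hA]
    simp only [map_pow]
  rw [mulVec_eq_pow_mulVec_add_geom_sum_mulVec A b m l N hrec, hpow, hsum]
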